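/- Suppose k_Q := ∫_M Q dμ ≠ 0 and that there exists ω₀ ∈ C(M,ℝ) such that Q_{ω₀} is a constant function with value q. Then q ≠ 0, and for every u ∈ ker P the component u₀ := (1/k_Q)·∫_M u·Q dμ of the decomposition ker P = {constants} ⊕ 𝒩(𝒬) equals the mean of u with respect to μ_{ω₀}, i.e. u₀ = (∫_M u dμ_{ω₀}) / μ_{ω₀}(M); equivalently, ∫_M (u − u₀) dμ_{ω₀} = 0. (The conformal decomposition recovers the Hodge decomposition of 𝒩(P) for a metric with constant Q-curvature.) -/

import Mathlib

/-!
If `Q_{ω₀} ≡ q`, then `Q + Pω₀ = q e^{nω₀}`. For `u ∈ ker P` self-adjointness gives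
`∫ u Pω₀ dμ = ∫ (Pu) ω₀ dμ = 0`, hence `∫ u Q dμ = q ∫ u dμ_{ω₀}`. Taking `u = 1` yields
`k_Q = q μ_{ω₀}(M)`, so `q ≠ 0`, and dividing the two identities identifies `u₀` with the
`μ_{ω₀}`-mean of `u`. Since `u - u₀ ∈ 𝒩(𝒬)`, the same identity shows its `μ_{ω₀}`-integral vanishes.
-/

open MeasureTheory

variable {M : Type*} [TopologicalSpace M] [MeasurableSpace M]

/-- The transformed Q-curvature `Q_ω = e^{-nω}(Q + Pω)`. -/
noncomputable def Qcurv (n : ℝ) (P : C(M, ℝ) →ₗ[ℝ] C(M, ℝ)) (Q ω : C(M, ℝ)) : C(M, ℝ) :=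
  ⟨fun x => Real.exp (-n * ω x) * (Q x + P ω x),
    (Real.continuous_exp.comp (continuous_const.mul ω.continuous)).mul
      (Q.continuous.add (P ω).continuous)⟩

/-- The conformally rescaled measure `μ_ω`, with density `e^{nω}` w.r.t. `μ`. -/
noncomputable def confMeasure (μ : Measure M) (n : ℝ) (ω : C(M, ℝ)) : Measure M :=
  μ.withDensity fun x => ENNReal.ofReal (Real.exp (n * ω x))

/-- `𝒩(𝒬) = {u ∈ ker P : ∫ u·Q dμ = 0}`. -/
def NQ (μ : Measure M) (P : C(M, ℝ) →ₗ[ℝ] C(M, ℝ)) (Q : C(M, ℝ)) : Set C(M, ℝ) :=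
  {u | P u = 0 ∧ ∫ x, u x * Q x ∂μ = 0}

/-- `ℱ = ⋂_ω ℱ^ω`, where `ℱ^ω` is the set of `f` not `L²(μ_ω)`-orthogonal to `𝒩(𝒬)`. -/
def Fcal (μ : Measure M) (n : ℝ) (P : C(M, ℝ) →ₗ[ℝ] C(M, ℝ)) (Q : C(M, ℝ)) : Set C(M, ℝ) :=
  {f | ∀ ω : C(M, ℝ), ∃ u ∈ NQ μ P Q, ∫ x, f x * u x ∂(confMeasure μ n ω) ≠ 0}

section ConstantQCurvature

variable [OpensMeasurableSpace M]

theorem integral_confMeasure (μ : Measure M) (n : ℝ) (ω : C(M, ℝ)) (f : M → ℝ) :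
    ∫ x, f x ∂confMeasure μ n ω = ∫ x, Real.exp (n * ω x) * f x ∂μ := by
  rw [confMeasure, integral_withDensity_eq_integral_toReal_smul
    (ω.continuous.const_mul n).rexp.measurable.ennreal_ofReal
    (ae_of_all _ fun _ => ENNReal.ofReal_lt_top)]
  simp only [ENNReal.toReal_ofReal (Real.exp_pos _).le, smul_eq_mul]

variable [CompactSpace M] {μ : Measure M} [IsFiniteMeasure μ] {n : ℝ}
  {P : C(M, ℝ) →ₗ[ℝ] C(M, ℝ)} {Q ω : C(M, ℝ)} {q : ℝ}

theorem integrable_mul_of_compactSpace (u v : C(M, ℝ)) : Integrable (fun x => u x * v x) μ :=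
  (u.continuous.mul v.continuous).integrable_of_hasCompactSupport (.of_compactSpace _)

theorem integral_mul_eq_mul_integral_confMeasure
    (hPsa : ∀ u v : C(M, ℝ), ∫ x, u x * P v x ∂μ = ∫ x, P u x * v x ∂μ)
    (hq : Qcurv n P Q ω = ContinuousMap.const M q) {u : C(M, ℝ)} (hu : P u = 0) :
    ∫ x, u x * Q x ∂μ = q * ∫ x, u x ∂confMeasure μ n ω := by
  have hPω : ∫ x, u x * P ω x ∂μ = 0 := by simp [hPsa, hu]
  have hQω (x : M) : Q x + P ω x = q * Real.exp (n * ω x) := by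
    have h := DFunLike.congr_fun hq x
    simp only [Qcurv, ContinuousMap.coe_mk, ContinuousMap.const_apply] at h
    rw [← h, mul_right_comm, ← Real.exp_add, neg_mul, neg_add_cancel, Real.exp_zero, one_mul]
  calc ∫ x, u x * Q x ∂μ = ∫ x, u x * (Q x + P ω x) ∂μ := by
        simp_rw [mul_add]
        rw [integral_add (integrable_mul_of_compactSpace _ _) (integrable_mul_of_compactSpace _ _),
          hPω, add_zero]
    _ = q * ∫ x, u x ∂confMeasure μ n ω := by
        simp_rw [integral_confMeasure, hQω, ← integral_const_mul]
        congr 1 with x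
        ring

theorem integral_eq_mul_measureReal_confMeasure_univ
    (hPc : ∀ c : ℝ, P (ContinuousMap.const M c) = 0)
    (hPsa : ∀ u v : C(M, ℝ), ∫ x, u x * P v x ∂μ = ∫ x, P u x * v x ∂μ)
    (hq : Qcurv n P Q ω = ContinuousMap.const M q) :
    ∫ x, Q x ∂μ = q * (confMeasure μ n ω).real Set.univ := by
  simpa using integral_mul_eq_mul_integral_confMeasure hPsa hq (hPc 1)

theorem sub_const_mem_NQ (hPc : ∀ c : ℝ, P (ContinuousMap.const M c) = 0)
    (hk : (∫ x, Q x ∂μ) ≠ 0) {u : C(M, ℝ)} (hu : P u = 0) :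
    u - ContinuousMap.const M ((∫ x, u x * Q x ∂μ) / ∫ x, Q x ∂μ) ∈ NQ μ P Q := by
  refine ⟨by rw [map_sub, hu, hPc, sub_zero], ?_⟩
  simp only [ContinuousMap.sub_apply, ContinuousMap.const_apply, sub_mul]
  rw [integral_sub (integrable_mul_of_compactSpace _ _)
      ((Q.continuous.integrable_of_hasCompactSupport (.of_compactSpace _)).const_mul _),
    integral_const_mul, div_mul_cancel₀ _ hk, sub_self]

theorem integral_confMeasure_eq_zero_of_mem_NQ
    (hPsa : ∀ u v : C(M, ℝ), ∫ x, u x * P v x ∂μ = ∫ x, P u x * v x ∂μ)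
    (hq : Qcurv n P Q ω = ContinuousMap.const M q) (hq0 : q ≠ 0) {u : C(M, ℝ)}
    (hu : u ∈ NQ μ P Q) : ∫ x, u x ∂confMeasure μ n ω = 0 := by
  have h := integral_mul_eq_mul_integral_confMeasure hPsa hq hu.1
  rw [hu.2, eq_comm, mul_eq_zero] at h
  exact h.resolve_left hq0

end ConstantQCurvature

variable [BorelSpace M] [CompactSpace M] [ConnectedSpace M]
variable (μ : Measure M) [IsFiniteMeasure μ] [Measure.IsOpenPosMeasure μ]
variable (n : ℝ) (P : C(M, ℝ) →ₗ[ℝ] C(M, ℝ)) (Q : C(M, ℝ))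


theorem stmt14
    (hPc : ∀ c : ℝ, P (ContinuousMap.const M c) = 0)
    (hPsa : ∀ u v : C(M, ℝ), ∫ x, u x * P v x ∂μ = ∫ x, P u x * v x ∂μ)
    (hk : (∫ x, Q x ∂μ) ≠ 0)
    (ω₀ : C(M, ℝ)) (q : ℝ) (hq : Qcurv n P Q ω₀ = ContinuousMap.const M q) :
    q ≠ 0 ∧
      ∀ u : C(M, ℝ), P u = 0 →
        (∫ x, u x * Q x ∂μ) / (∫ x, Q x ∂μ) =
            (∫ x, u x ∂(confMeasure μ n ω₀)) / ((confMeasure μ n ω₀) Set.univ).toReal ∧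
          ∫ x, (u x - (∫ y, u y * Q y ∂μ) / (∫ y, Q y ∂μ)) ∂(confMeasure μ n ω₀) = 0 := by
  have hmass := integral_eq_mul_measureReal_confMeasure_univ hPc hPsa hq
  have hq0 : q ≠ 0 := by
    rintro rfl
    exact hk (by simpa using hmass)
  refine ⟨hq0, fun u hu => ⟨?_, ?_⟩⟩
  · rw [integral_mul_eq_mul_integral_confMeasure hPsa hq hu, hmass, ← measureReal_def,
      mul_div_mul_left _ _ hq0]
  · simpa using integral_confMeasure_eq_zero_of_mem_NQ hPsa hq hq0 (sub_const_mem_NQ hPc hk hu)
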